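/- Pullback formula for the momentum density v·dx ⊗ dⁿx (the paper's computation of g_t^* L_u(v·dx ⊗ dⁿx)): for every continuously differentiable time-independent vector field v : ℝⁿ → ℝⁿ and all (t,l), ∂_t [ det(D_l g(t,l)) · (D_l g(t,l))ᵀ v(g(t,l)) ] = det(D_l g(t,l)) · (D_l g(t,l))ᵀ [ ∇·(u(t,·) ⊗ v) + (∇u(t,·))ᵀ v ](g(t,l)), where (∇·(u ⊗ v))ᵢ = Σⱼ ∂_{xⱼ}(uⱼ vᵢ) and ((∇u)ᵀ v)ᵢ = Σⱼ vⱼ ∂_{xᵢ} uⱼ. -/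

import Mathlib

/-!
Write `A s = D_l g(s, l)` and `B = D_x u(t, g(t, l))`. Both partial derivatives of `g`, namely
`∂_t g = u(t, g)` and `D_l g`, are `C¹`, so `g` is `C²` and its mixed partials commute:
`∂_t A = D_l (u(t, g(t, ·))) = B A`. Jacobi's formula turns this into
`∂_t det A = tr B · det A`, while `∂_t (Aᵀ v(g)) = Aᵀ (Bᵀ v + Dv · u)`. Since `tr B = ∇·u` and
`∇·(u ⊗ v) = (∇·u) v + Dv · u`, the two sides agree.
-/

open ContinuousLinearMap Matrix

section Partials

variable {𝕜 E F : Type*} [NontriviallyNormedField 𝕜] [NormedAddCommGroup E] [NormedSpace 𝕜 E]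
  [NormedAddCommGroup F] [NormedSpace 𝕜 F] {f : 𝕜 × E → F} {t : 𝕜} {x : E}

theorem hasDerivAt_partial_fst (hf : DifferentiableAt 𝕜 f (t, x)) :
    HasDerivAt (fun s => f (s, x)) (fderiv 𝕜 f (t, x) (1, 0)) t := by
  simpa [Function.comp_def] using
    hf.hasFDerivAt.comp_hasDerivAt t ((hasDerivAt_id t).prodMk (hasDerivAt_const t x))

theorem hasFDerivAt_partial_snd (hf : DifferentiableAt 𝕜 f (t, x)) :
    HasFDerivAt (fun y => f (t, y)) ((fderiv 𝕜 f (t, x)).comp (inr 𝕜 𝕜 E)) x :=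
  hf.hasFDerivAt.comp x (hasFDerivAt_prodMk_right t x)

theorem fderiv_eq_smulRight_deriv_add_fderiv_comp_snd (hf : DifferentiableAt 𝕜 f (t, x)) :
    fderiv 𝕜 f (t, x) = (fst 𝕜 𝕜 E).smulRight (deriv (fun s => f (s, x)) t)
      + (fderiv 𝕜 (fun y => f (t, y)) x).comp (snd 𝕜 𝕜 E) := by
  rw [(hasDerivAt_partial_fst hf).deriv, (hasFDerivAt_partial_snd hf).fderiv]
  ext <;> simp [← Prod.zero_eq_mk]

theorem contDiff_succ_of_partials {n : ℕ} (hf : Differentiable 𝕜 f)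
    (hfst : ContDiff 𝕜 n fun p : 𝕜 × E => deriv (fun s => f (s, p.2)) p.1)
    (hsnd : ContDiff 𝕜 n fun p : 𝕜 × E => fderiv 𝕜 (fun y => f (p.1, y)) p.2) :
    ContDiff 𝕜 (n + 1) f := by
  refine contDiff_succ_iff_fderiv.2 ⟨hf, by simp, ?_⟩
  have hdecomp : fderiv 𝕜 f = fun p => (fst 𝕜 𝕜 E).smulRight (deriv (fun s => f (s, p.2)) p.1)
      + (fderiv 𝕜 (fun y => f (p.1, y)) p.2).comp (snd 𝕜 𝕜 E) :=
    funext fun p => fderiv_eq_smulRight_deriv_add_fderiv_comp_snd (hf p)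
  rw [hdecomp]
  exact ((smulRightL 𝕜 (𝕜 × E) F (fst 𝕜 𝕜 E)).contDiff.comp hfst).add
    (((compL 𝕜 (𝕜 × E) E F).flip (snd 𝕜 𝕜 E)).contDiff.comp hsnd)

end Partials

section Flow

variable {E F : Type*} [NormedAddCommGroup E] [NormedSpace ℝ E]
  [NormedAddCommGroup F] [NormedSpace ℝ F]

theorem hasDerivAt_fderiv_partial_snd {f : ℝ × E → F} (hf : ContDiff ℝ 2 f) (t : ℝ) (x : E) :
    HasDerivAt (fun s => fderiv ℝ (fun y => f (s, y)) x)
      (fderiv ℝ (fun y => deriv (fun s => f (s, y)) t) x) t := by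
  have hf1 : Differentiable ℝ f := hf.differentiable two_ne_zero
  have hG : Differentiable ℝ (fderiv ℝ f) :=
    (hf.fderiv_right (m := 1) (by norm_num)).differentiable one_ne_zero
  set G'' := fderiv ℝ (fderiv ℝ f) (t, x)
  have hsymm : IsSymmSndFDerivAt ℝ f (t, x) := hf.contDiffAt.isSymmSndFDerivAt (by simp)
  have htime : HasDerivAt (fun s => fderiv ℝ f (s, x)) (G'' (1, 0)) t :=
    hasDerivAt_partial_fst (hG (t, x))
  have hspace : HasFDerivAt (fun y => fderiv ℝ f (t, y) (1, 0))
      ((apply ℝ F ((1 : ℝ), (0 : E))).comp (G''.comp (inr ℝ ℝ E))) x :=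
    (apply ℝ F ((1 : ℝ), (0 : E))).hasFDerivAt.comp x (hasFDerivAt_partial_snd (hG (t, x)))
  simp only [fun s => (hasFDerivAt_partial_snd (hf1 (s, x))).fderiv,
    fun y => (hasDerivAt_partial_fst (hf1 (t, y))).deriv, hspace.fderiv]
  refine (((compL ℝ E (ℝ × E) F).flip (inr ℝ ℝ E)).hasFDerivAt.comp_hasDerivAt t
    htime).congr_deriv ?_
  ext w
  exact hsymm (1, 0) (0, w)

variable {g : ℝ × E → F} {u : ℝ × F → F}

theorem contDiff_two_of_flow (hg : ContDiff ℝ 1 g)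
    (hDg : ContDiff ℝ 1 fun p : ℝ × E => fderiv ℝ (fun l => g (p.1, l)) p.2)
    (hu : ContDiff ℝ 1 u) (hflow : ∀ t l, deriv (fun s => g (s, l)) t = u (t, g (t, l))) :
    ContDiff ℝ 2 g :=
  contDiff_succ_of_partials (n := 1) (hg.differentiable one_ne_zero)
    (by simp only [hflow, Nat.cast_one]; exact hu.comp (contDiff_fst.prodMk hg)) hDg

theorem hasDerivAt_fderiv_flow (hg : ContDiff ℝ 2 g) (hu : Differentiable ℝ u)
    (hflow : ∀ t l, deriv (fun s => g (s, l)) t = u (t, g (t, l))) (t : ℝ) (l : E) :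
    HasDerivAt (fun s => fderiv ℝ (fun l' => g (s, l')) l)
      ((fderiv ℝ (fun x => u (t, x)) (g (t, l))).comp (fderiv ℝ (fun l' => g (t, l')) l)) t := by
  have hgt : Differentiable ℝ fun l' => g (t, l') :=
    (hg.differentiable two_ne_zero).comp (differentiable_const t |>.prodMk differentiable_id)
  have hut : Differentiable ℝ fun x => u (t, x) :=
    hu.comp (differentiable_const t |>.prodMk differentiable_id)
  have hmixed := hasDerivAt_fderiv_partial_snd hg t l
  simp only [hflow] at hmixed
  rwa [fderiv_fun_comp l (hut _) (hgt l)] at hmixed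

end Flow

section Jacobi

variable {𝕜 ι : Type*} [NontriviallyNormedField 𝕜] [Fintype ι] [DecidableEq ι]

theorem Matrix.det_updateRow_eq_vecMul_adjugate {R : Type*} [CommRing R] (A : Matrix ι ι R)
    (i : ι) (b : ι → R) : (A.updateRow i b).det = (b ᵥ* A.adjugate) i := by
  rw [← cramer_transpose_apply, cramer_eq_adjugate_mulVec, ← adjugate_transpose, mulVec_transpose]

theorem Matrix.hasDerivAt_det {M : 𝕜 → Matrix ι ι 𝕜} {M' : Matrix ι ι 𝕜} {t : 𝕜}
    (hM : HasDerivAt M M' t) :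
    HasDerivAt (fun s => (M s).det) (trace ((M t).adjugate * M')) t := by
  let D : ContinuousMultilinearMap 𝕜 (fun _ : ι => ι → 𝕜) 𝕜 :=
    { toMultilinearMap := (detRowAlternating : (ι → 𝕜) [⋀^ι]→ₗ[𝕜] 𝕜).toMultilinearMap
      cont := continuous_id.matrix_det }
  refine ((D.hasFDerivAt (M t)).comp_hasDerivAt t hM).congr_deriv ?_
  rw [show D.linearDeriv (M t) M' = ∑ i, D (Function.update (M t) i (M' i)) from
    D.linearDeriv_apply _ _, trace_mul_comm, trace]
  exact Finset.sum_congr rfl fun i _ => det_updateRow_eq_vecMul_adjugate (M t) i (M' i)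

theorem Matrix.hasDerivAt_det_of_hasDerivAt_mul {M : 𝕜 → Matrix ι ι 𝕜} {N : Matrix ι ι 𝕜}
    {t : 𝕜} (hM : HasDerivAt M (N * M t) t) :
    HasDerivAt (fun s => (M s).det) (trace N * (M t).det) t := by
  refine (hasDerivAt_det hM).congr_deriv ?_
  rw [← Matrix.mul_assoc, trace_mul_comm, ← Matrix.mul_assoc, mul_adjugate, smul_mul,
    Matrix.one_mul, trace_smul, smul_eq_mul, mul_comm]

theorem ContinuousLinearMap.hasDerivAt_det_of_hasDerivAt_comp [CompleteSpace 𝕜] {E : Type*}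
    [NormedAddCommGroup E] [NormedSpace 𝕜 E] [FiniteDimensional 𝕜 E] {A : 𝕜 → E →L[𝕜] E}
    {B : E →L[𝕜] E} {t : 𝕜} (hA : HasDerivAt A (B ∘L A t) t) :
    HasDerivAt (fun s => (A s).det) (LinearMap.trace 𝕜 E B * (A t).det) t := by
  let b := Module.finBasis 𝕜 E
  let L : (E →L[𝕜] E) →L[𝕜] Fin _ → Fin _ → 𝕜 :=
    ((LinearMap.toMatrix b b).toLinearMap ∘ₗ coeLM 𝕜).toContinuousLinearMap
  have hL : ∀ C : E →L[𝕜] E, L C = LinearMap.toMatrix b b C := fun _ => rfl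
  have hM : HasDerivAt (fun s => L (A s))
      (LinearMap.toMatrix b b B * LinearMap.toMatrix b b (A t)) t :=
    (L.hasFDerivAt.comp_hasDerivAt t hA).congr_deriv (LinearMap.toMatrix_comp b b b B (A t))
  have hdet := hasDerivAt_det_of_hasDerivAt_mul hM
  simp only [hL, LinearMap.det_toMatrix, ← LinearMap.trace_eq_matrix_trace] at hdet
  exact hdet

end Jacobi

section Coordinates

variable {ι 𝕜 : Type*} [Fintype ι] [NontriviallyNormedField 𝕜]

theorem HasDerivAt.dotProduct {a b : 𝕜 → ι → 𝕜} {a' b' : ι → 𝕜} {t : 𝕜}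
    (ha : HasDerivAt a a' t) (hb : HasDerivAt b b' t) :
    HasDerivAt (fun s => a s ⬝ᵥ b s) (a' ⬝ᵥ b t + a t ⬝ᵥ b') t :=
  (HasDerivAt.fun_sum fun j _ => (hasDerivAt_pi.1 ha j).mul (hasDerivAt_pi.1 hb j)).congr_deriv
    Finset.sum_add_distrib

variable [DecidableEq ι]

theorem map_eq_sum_smul_single {R M F : Type*} [CommRing R] [AddCommGroup M] [Module R M]
    [FunLike F (ι → R) M] [LinearMapClass F R (ι → R) M] (f : F) (w : ι → R) :
    f w = ∑ k, w k • f (Pi.single k 1) := by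
  conv_lhs => rw [← Finset.univ_sum_single w]
  simp only [map_sum]
  congr! with k
  rw [← map_smul, ← Pi.single_smul', smul_eq_mul, mul_one]

theorem LinearMap.trace_eq_sum_apply_single {R : Type*} [CommRing R] (f : (ι → R) →ₗ[R] ι → R) :
    LinearMap.trace R (ι → R) f = ∑ k, f (Pi.single k 1) k := by
  rw [← Matrix.toLin'_toMatrix' f, Matrix.trace_toLin'_eq]
  simp [Matrix.trace, LinearMap.toMatrix'_apply]

theorem map_dotProduct_eq_dotProduct_transpose {R F : Type*} [CommRing R]
    [FunLike F (ι → R) (ι → R)] [LinearMapClass F R (ι → R) (ι → R)] (f : F) (w c : ι → R) :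
    f w ⬝ᵥ c = w ⬝ᵥ fun j => c ⬝ᵥ f (Pi.single j 1) := by
  rw [map_eq_sum_smul_single f w, sum_dotProduct]
  refine Finset.sum_congr rfl fun j _ => ?_
  rw [smul_dotProduct, dotProduct_comm, smul_eq_mul]

theorem sum_fderiv_apply_mul_single {a : (ι → 𝕜) → ι → 𝕜} {b : (ι → 𝕜) → 𝕜} {x : ι → 𝕜}
    (ha : DifferentiableAt 𝕜 a x) (hb : DifferentiableAt 𝕜 b x) :
    ∑ k, fderiv 𝕜 (fun y => a y k * b y) x (Pi.single k 1)
      = LinearMap.trace 𝕜 (ι → 𝕜) (fderiv 𝕜 a x) * b x + fderiv 𝕜 b x (a x) := by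
  simp only [fun k => fderiv_fun_mul (differentiableAt_pi.1 ha k) hb, fderiv_apply ha]
  rw [LinearMap.trace_eq_sum_apply_single, map_eq_sum_smul_single (fderiv 𝕜 b x),
    Finset.sum_mul, ← Finset.sum_add_distrib]
  refine Finset.sum_congr rfl fun k _ => ?_
  simp only [_root_.add_apply, _root_.smul_apply, coe_comp, Function.comp_apply, proj_apply,
    coe_coe, smul_eq_mul]
  ring

end Coordinates

/-- **Pullback formula for the momentum density `v·dx ⊗ dⁿx`** (the computation of
`g_t^* L_u (v·dx ⊗ dⁿx)`). For every continuously differentiable time-independent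
vector field `v : ℝⁿ → ℝⁿ` and all `(t, l)`,
`∂_t [det (D_l g(t,l)) · (D_l g(t,l))ᵀ v(g(t,l))]
  = det (D_l g(t,l)) · (D_l g(t,l))ᵀ [∇·(u(t,·) ⊗ v) + (∇ u(t,·))ᵀ v](g(t,l))`,
written componentwise: component `i` of `(D_l g)ᵀ w` is `Σ_j (D_l g (e_i))_j w_j`,
`(∇·(u ⊗ v))_j = Σ_k ∂_{x_k}(u_k v_j)` and `((∇u)ᵀ v)_j = Σ_k v_k ∂_{x_j} u_k`. -/
theorem momentum_density_pullback_formula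
    (n : ℕ)
    (g : ℝ × (Fin n → ℝ) → (Fin n → ℝ))
    (u : ℝ × (Fin n → ℝ) → (Fin n → ℝ))
    (v : (Fin n → ℝ) → (Fin n → ℝ))
    (hg : ContDiff ℝ 1 g)
    (hDg : ContDiff ℝ 1 (fun p : ℝ × (Fin n → ℝ) =>
      fderiv ℝ (fun l => g (p.1, l)) p.2))
    (hu : ContDiff ℝ 1 u)
    (hv : ContDiff ℝ 1 v)
    (hflow : ∀ t l, deriv (fun s => g (s, l)) t = u (t, g (t, l))) :
    ∀ (t : ℝ) (l : Fin n → ℝ) (i : Fin n),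
      deriv (fun s =>
          (fderiv ℝ (fun l' => g (s, l')) l).det *
            ∑ j, (fderiv ℝ (fun l' => g (s, l')) l (Pi.single i 1)) j * v (g (s, l)) j) t
        = (fderiv ℝ (fun l' => g (t, l')) l).det *
            ∑ j, (fderiv ℝ (fun l' => g (t, l')) l (Pi.single i 1)) j *
              ((∑ k, fderiv ℝ (fun x => u (t, x) k * v x j) (g (t, l)) (Pi.single k 1))
                + ∑ k, v (g (t, l)) k *
                    fderiv ℝ (fun x => u (t, x) k) (g (t, l)) (Pi.single j 1)) := by
  intro t l i
  have hud : Differentiable ℝ u := hu.differentiable one_ne_zero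
  have hvd : Differentiable ℝ v := hv.differentiable one_ne_zero
  have hA := hasDerivAt_fderiv_flow (contDiff_two_of_flow hg hDg hu hflow) hud hflow t l
  have hAi := hA.clm_apply (hasDerivAt_const t (Pi.single i 1 : Fin n → ℝ))
  have hcurve : HasDerivAt (fun s => g (s, l)) (u (t, g (t, l))) t := hflow t l ▸
    (hasDerivAt_partial_fst (hg.differentiable one_ne_zero (t, l))).differentiableAt.hasDerivAt
  have hvg := (hvd _).hasFDerivAt.comp_hasDerivAt t hcurve
  set x := g (t, l)
  set B := fderiv ℝ (fun y => u (t, y)) x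
  have hut : DifferentiableAt ℝ (fun y => u (t, y)) x :=
    (hud _).comp x (differentiableAt_const t |>.prodMk differentiableAt_id)
  have hdiv : ∀ j, ∑ k, fderiv ℝ (fun y => u (t, y) k * v y j) x (Pi.single k 1)
      = LinearMap.trace ℝ _ B * v x j + fderiv ℝ v x (u (t, x)) j := fun j => by
    rw [sum_fderiv_apply_mul_single hut (differentiableAt_pi.1 (hvd x) j), fderiv_apply (hvd x)]
    rfl
  have hgrad : ∀ j, ∑ k, v x k * fderiv ℝ (fun y => u (t, y) k) x (Pi.single j 1)
      = v x ⬝ᵥ B (Pi.single j 1) := fun j => by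
    simp only [fderiv_apply hut]
    rfl
  refine ((hasDerivAt_det_of_hasDerivAt_comp hA).mul (hAi.dotProduct hvg)).deriv.trans ?_
  simp only [hdiv, hgrad, map_zero, add_zero, coe_comp, Function.comp_apply]
  rw [map_dotProduct_eq_dotProduct_transpose B]
  simp only [dotProduct, Finset.mul_sum, mul_add, ← Finset.sum_add_distrib]
  exact Finset.sum_congr rfl fun j _ => by ring
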